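/- arXiv:gr-qc/0701049 — 2 statements merged into one kernel-verified Lean document; each statement's English description precedes it below -/
import Mathlib

section
/- For every smooth compactly supported function φ : (0,∞) → ℝ (with φ, φ' bounded near 0), the inequality ∫₀^∞ ((1+r²)/2 · φ'(r)² − φ(r)²) r² dr ≥ ∫₀^∞ ((1+r²)/36 · φ'(r)² + (1/16) φ(r)²) r² dr holds. -/
open MeasureTheory Set Filter Topology

lemma aux_integrable {F : ℝ → ℝ} (hF : ContinuousOn F (Ioi 0))
    (M R : ℝ) (hb : ∀ r ∈ Ioo (0:ℝ) 1, |F r| ≤ M)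
    (hz : ∀ r : ℝ, R ≤ r → F r = 0) :
    IntegrableOn F (Ioi 0) := by
  have h1 : IntegrableOn F (Ioo 0 1) := by
    refine ⟨(hF.mono Ioo_subset_Ioi_self).aestronglyMeasurable measurableSet_Ioo, ?_⟩
    refine MeasureTheory.HasFiniteIntegral.restrict_of_bounded (C := M) ?_ ?_
    · simp [Real.volume_Ioo]
    · filter_upwards [ae_restrict_mem measurableSet_Ioo] with r hr
      simpa [Real.norm_eq_abs] using hb r hr
  have h2 : IntegrableOn F (Icc 1 (max 1 R)) :=
    ContinuousOn.integrableOn_compact isCompact_Icc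
      (hF.mono (fun x hx => lt_of_lt_of_le one_pos hx.1))
  have h3 : IntegrableOn F (Ici (max 1 R)) :=
    (integrableOn_zero).congr_fun
      (fun x hx => (hz x (le_trans (le_max_right 1 R) hx)).symm) measurableSet_Ici
  have h23 : IntegrableOn F (Ici 1) := by
    refine (h2.union h3).mono_set (fun x hx => ?_)
    rcases le_total x (max 1 R) with h | h
    · exact Or.inl ⟨hx, h⟩
    · exact Or.inr h
  refine (h1.union h23).mono_set (fun x hx => ?_)
  rcases lt_or_ge x 1 with h | h
  · exact Or.inl ⟨hx, h⟩
  · exact Or.inr h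

theorem stmt_3 (φ : ℝ → ℝ) (hφ : ContDiffOn ℝ (⊤ : ℕ∞) φ (Ioi 0))
    (hsupp : HasCompactSupport φ)
    (hbd : ∃ M : ℝ, ∀ r ∈ Ioo (0:ℝ) 1, |φ r| ≤ M ∧ |deriv φ r| ≤ M) :
    ∫ r in Ioi (0:ℝ), ((1 + r ^ 2) / 36 * (deriv φ r) ^ 2 + (1 / 16) * (φ r) ^ 2) * r ^ 2 ≤
      ∫ r in Ioi (0:ℝ), ((1 + r ^ 2) / 2 * (deriv φ r) ^ 2 - (φ r) ^ 2) * r ^ 2 := by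
  obtain ⟨M, hM⟩ := hbd
  obtain ⟨R1, hR1pos, hR1⟩ := hsupp.exists_pos_le_norm
  obtain ⟨R2, hR2pos, hR2⟩ := hsupp.deriv.exists_pos_le_norm
  set R : ℝ := max R1 R2 with hRdef
  have hφz : ∀ r : ℝ, R ≤ r → φ r = 0 := fun r hr =>
    hR1 r (le_trans (le_max_left _ _) (le_trans hr (le_abs_self r)))
  have hφ'z : ∀ r : ℝ, R ≤ r → deriv φ r = 0 := fun r hr =>
    hR2 r (le_trans (le_max_right _ _) (le_trans hr (le_abs_self r)))
  have hderiv_at : ∀ r ∈ Ioi (0:ℝ), HasDerivAt φ (deriv φ r) r := fun r hr =>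
    ((hφ.differentiableOn (by simp)).differentiableAt (isOpen_Ioi.mem_nhds hr)).hasDerivAt
  have hcφ : ContinuousOn φ (Ioi 0) := hφ.continuousOn
  have hcφ' : ContinuousOn (deriv φ) (Ioi 0) :=
    hφ.continuousOn_deriv_of_isOpen isOpen_Ioi (by simp)
  have hcr : ∀ n : ℕ, ContinuousOn (fun r : ℝ => r ^ n) (Ioi 0) :=
    fun n => (continuous_pow n).continuousOn
  set fA : ℝ → ℝ := fun r => (deriv φ r) ^ 2 * r ^ 4 with hfA
  set fB : ℝ → ℝ := fun r => (φ r) ^ 2 * r ^ 2 with hfB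
  set fC : ℝ → ℝ := fun r => φ r * deriv φ r * r ^ 3 with hfC
  set fD : ℝ → ℝ := fun r => (deriv φ r) ^ 2 * r ^ 2 with hfD
  have intA : IntegrableOn fA (Ioi 0) := by
    refine aux_integrable ((hcφ'.pow 2).mul (hcr 4)) (M ^ 2) R (fun r hr => ?_)
      (fun r hr => by simp [hfA, hφ'z r hr])
    obtain ⟨h1, h1'⟩ := abs_le.mp (hM r hr).2
    have h2 : (0:ℝ) < r := hr.1
    have h3 : r < 1 := hr.2
    have h4 : r ^ 4 ≤ 1 := pow_le_one₀ h2.le h3.le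
    simp only [hfA]
    rw [abs_le]
    constructor
    · nlinarith [sq_nonneg (deriv φ r), pow_pos h2 4, sq_nonneg (deriv φ r * r ^ 2)]
    · nlinarith [sq_nonneg (deriv φ r), pow_pos h2 4]
  have intB : IntegrableOn fB (Ioi 0) := by
    refine aux_integrable ((hcφ.pow 2).mul (hcr 2)) (M ^ 2) R (fun r hr => ?_)
      (fun r hr => by simp [hfB, hφz r hr])
    obtain ⟨h1, h1'⟩ := abs_le.mp (hM r hr).1
    have h2 : (0:ℝ) < r := hr.1
    have h3 : r < 1 := hr.2
    have h4 : r ^ 2 ≤ 1 := pow_le_one₀ h2.le h3.le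
    simp only [hfB]
    rw [abs_le]
    constructor
    · nlinarith [sq_nonneg (φ r), pow_pos h2 2, sq_nonneg (φ r * r)]
    · nlinarith [sq_nonneg (φ r), pow_pos h2 2]
  have intC : IntegrableOn fC (Ioi 0) := by
    refine aux_integrable ((hcφ.mul hcφ').mul (hcr 3)) (M ^ 2) R (fun r hr => ?_)
      (fun r hr => by simp [hfC, hφz r hr])
    obtain ⟨h1, h1'⟩ := hM r hr
    have h2 : (0:ℝ) < r := hr.1
    have h3 : r < 1 := hr.2
    have habs : |fC r| = |φ r| * |deriv φ r| * |r ^ 3| := by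
      simp only [hfC, abs_mul]
    rw [habs]
    have h4 : |r ^ 3| ≤ 1 := by
      rw [abs_pow, abs_of_pos h2]
      exact pow_le_one₀ h2.le h3.le
    nlinarith [abs_nonneg (φ r), abs_nonneg (deriv φ r), abs_nonneg (r ^ 3),
      mul_nonneg (abs_nonneg (φ r)) (abs_nonneg (deriv φ r))]
  have intD : IntegrableOn fD (Ioi 0) := by
    refine aux_integrable ((hcφ'.pow 2).mul (hcr 2)) (M ^ 2) R (fun r hr => ?_)
      (fun r hr => by simp [hfD, hφ'z r hr])
    obtain ⟨h1, h1'⟩ := abs_le.mp (hM r hr).2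
    have h2 : (0:ℝ) < r := hr.1
    have h3 : r < 1 := hr.2
    have h4 : r ^ 2 ≤ 1 := pow_le_one₀ h2.le h3.le
    simp only [hfD]
    rw [abs_le]
    constructor
    · nlinarith [sq_nonneg (deriv φ r), pow_pos h2 2, sq_nonneg (deriv φ r * r)]
    · nlinarith [sq_nonneg (deriv φ r), pow_pos h2 2]
  set A : ℝ := ∫ r in Ioi (0:ℝ), fA r with hA
  set B : ℝ := ∫ r in Ioi (0:ℝ), fB r with hB
  set C : ℝ := ∫ r in Ioi (0:ℝ), fC r with hC
  set D : ℝ := ∫ r in Ioi (0:ℝ), fD r with hD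
  -- FTC: ∫ (2 fC + 3 fB) = 0
  have hFTC : 2 * C + 3 * B = 0 := by
    set g : ℝ → ℝ := fun r => (φ r) ^ 2 * r ^ 3 with hg
    have hgderiv : ∀ r ∈ Ioi (0:ℝ), HasDerivAt g (2 * fC r + 3 * fB r) r := by
      intro r hr
      have h : HasDerivAt g _ r := ((hderiv_at r hr).pow 2).mul (hasDerivAt_pow 3 r)
      convert h using 1
      simp only [hfC, hfB, Pi.pow_apply]
      push_cast
      ring
    have hgcont : ContinuousWithinAt g (Ici 0) 0 := by
      have hg0 : g 0 = 0 := by simp [hg]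
      show Tendsto g (𝓝[Ici 0] 0) (𝓝 (g 0))
      rw [hg0]
      apply squeeze_zero' (g := fun r : ℝ => M ^ 2 * r ^ 3)
      · filter_upwards [eventually_mem_nhdsWithin] with r (hr : r ∈ Ici (0:ℝ))
        have : (0:ℝ) ≤ r := hr
        simp only [hg]
        positivity
      · have hlt : ∀ᶠ r in 𝓝[Ici (0:ℝ)] 0, r < 1 :=
          (eventually_lt_nhds zero_lt_one).filter_mono nhdsWithin_le_nhds
        filter_upwards [eventually_mem_nhdsWithin, hlt] with r (hr : r ∈ Ici (0:ℝ)) hr1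
        rcases eq_or_lt_of_le (Set.mem_Ici.mp hr : (0:ℝ) ≤ r) with h | h
        · simp [hg, ← h]
        · obtain ⟨ha, hb⟩ := abs_le.mp (hM r ⟨h, hr1⟩).1
          have hrp : (0:ℝ) ≤ r ^ 3 := by positivity
          simp only [hg]
          nlinarith [mul_nonneg (show (0:ℝ) ≤ M ^ 2 - φ r ^ 2 by nlinarith) hrp]
      · have : Tendsto (fun r : ℝ => M ^ 2 * r ^ 3) (𝓝 0) (𝓝 (M ^ 2 * 0 ^ 3)) :=
          (continuous_const.mul (continuous_pow 3)).tendsto 0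
        simpa using this.mono_left nhdsWithin_le_nhds
    have hgtop : Tendsto g atTop (𝓝 0) := by
      refine Tendsto.congr' ?_ tendsto_const_nhds
      filter_upwards [eventually_ge_atTop R] with r hr
      simp [hg, hφz r hr]
    have hint : IntegrableOn (fun r => 2 * fC r + 3 * fB r) (Ioi 0) :=
      (intC.const_mul 2).add (intB.const_mul 3)
    have h0 := integral_Ioi_of_hasDerivAt_of_tendsto hgcont hgderiv hint hgtop
    have hg0 : g 0 = 0 := by simp [hg]
    rw [hg0, sub_zero] at h0
    have e1 : Integrable (fun r => 2 * fC r) (volume.restrict (Ioi 0)) := intC.const_mul 2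
    have e2 : Integrable (fun r => 3 * fB r) (volume.restrict (Ioi 0)) := intB.const_mul 3
    rw [integral_add e1 e2, integral_const_mul _ _, integral_const_mul _ _] at h0
    exact h0
  -- Hardy-type bound
  have hHardy : 3 / 2 * B ≤ 2 / 3 * A := by
    have key : 0 ≤ ∫ r in Ioi (0:ℝ), (3 / 2 * fB r + 2 / 3 * fA r + 2 * fC r) := by
      refine setIntegral_nonneg measurableSet_Ioi (fun r hr => ?_)
      simp only [hfA, hfB, hfC]
      nlinarith [sq_nonneg (3 * φ r * r + 2 * deriv φ r * r ^ 2)]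
    have e1 : Integrable (fun r => 3 / 2 * fB r) (volume.restrict (Ioi 0)) := intB.const_mul _
    have e2 : Integrable (fun r => 2 / 3 * fA r) (volume.restrict (Ioi 0)) := intA.const_mul _
    have e3 : Integrable (fun r => 2 * fC r) (volume.restrict (Ioi 0)) := intC.const_mul _
    have e12 : Integrable (fun r => 3 / 2 * fB r + 2 / 3 * fA r) (volume.restrict (Ioi 0)) :=
      e1.add e2
    rw [integral_add e12 e3, integral_add e1 e2, integral_const_mul _ _, integral_const_mul _ _,
      integral_const_mul _ _] at key
    linarith
  have hDpos : 0 ≤ D := by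
    refine setIntegral_nonneg measurableSet_Ioi (fun r hr => ?_)
    simp only [hfD]; positivity
  have hBpos : 0 ≤ B := by
    refine setIntegral_nonneg measurableSet_Ioi (fun r hr => ?_)
    simp only [hfB]; positivity
  have hLHS : (∫ r in Ioi (0:ℝ), ((1 + r ^ 2) / 36 * (deriv φ r) ^ 2 + (1 / 16) * (φ r) ^ 2) * r ^ 2)
      = 1 / 36 * D + 1 / 36 * A + 1 / 16 * B := by
    have heq : (fun r : ℝ => ((1 + r ^ 2) / 36 * (deriv φ r) ^ 2 + (1 / 16) * (φ r) ^ 2) * r ^ 2)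
        = fun r => 1 / 36 * fD r + 1 / 36 * fA r + 1 / 16 * fB r := by
      funext r; simp only [hfA, hfB, hfD]; ring
    have e1 : Integrable (fun r => 1 / 36 * fD r) (volume.restrict (Ioi 0)) := intD.const_mul _
    have e2 : Integrable (fun r => 1 / 36 * fA r) (volume.restrict (Ioi 0)) := intA.const_mul _
    have e3 : Integrable (fun r => 1 / 16 * fB r) (volume.restrict (Ioi 0)) := intB.const_mul _
    have e12 : Integrable (fun r => 1 / 36 * fD r + 1 / 36 * fA r) (volume.restrict (Ioi 0)) :=
      e1.add e2
    rw [heq, integral_add e12 e3, integral_add e1 e2, integral_const_mul _ _, integral_const_mul _ _,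
      integral_const_mul _ _]
  have hRHS : (∫ r in Ioi (0:ℝ), ((1 + r ^ 2) / 2 * (deriv φ r) ^ 2 - (φ r) ^ 2) * r ^ 2)
      = 1 / 2 * D + 1 / 2 * A - B := by
    have heq : (fun r : ℝ => ((1 + r ^ 2) / 2 * (deriv φ r) ^ 2 - (φ r) ^ 2) * r ^ 2)
        = fun r => (1 / 2 * fD r + 1 / 2 * fA r) - fB r := by
      funext r; simp only [hfA, hfB, hfD]; ring
    have e1 : Integrable (fun r => 1 / 2 * fD r) (volume.restrict (Ioi 0)) := intD.const_mul _
    have e2 : Integrable (fun r => 1 / 2 * fA r) (volume.restrict (Ioi 0)) := intA.const_mul _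
    have e12 : Integrable (fun r => 1 / 2 * fD r + 1 / 2 * fA r) (volume.restrict (Ioi 0)) :=
      e1.add e2
    rw [heq, integral_sub e12 intB, integral_add e1 e2, integral_const_mul _ _, integral_const_mul _ _]
  rw [hLHS, hRHS]
  linarith
end

section
/- Let Ω : ℝ × (0,∞) → ℝ be Ω(t,r) = 2/(√(1+(t−r)²)·√(1+(t+r)²)). Then Ω satisfies ∂²_t Ω − r^{-2} ∂_r (r² ∂_r Ω) = Ω³ on ℝ × (0,∞). -/
/-!
In null coordinates `u = t - r`, `v = t + r` the function factors as `Ω = 2 h(u) h(v)` with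
`h(x) = (1 + x²)^{-1/2}`, and for any product `f(u) g(v)` the radial wave operator reduces to
`4 f'(u) g'(v) - (2/r) ∂_r (f(u) g(v))`: the second derivatives of `f` and `g` cancel.
Since `h' = -x h³`, what remains is an algebraic identity in `h(u)` and `h(v)`.
-/

open Real

noncomputable def radialWave (Ω : ℝ → ℝ → ℝ) (t r : ℝ) : ℝ :=
  deriv (fun s => deriv (fun s' => Ω s' r) s) t
    - (1 / r ^ 2) * deriv (fun ρ => ρ ^ 2 * deriv (fun ρ' => Ω t ρ') ρ) r

section NullProduct

variable {f f' g g' : ℝ → ℝ}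

theorem hasDerivAt_comp_sub_mul_comp_add (hf : ∀ x, HasDerivAt f (f' x) x)
    (hg : ∀ x, HasDerivAt g (g' x) x) (r t : ℝ) :
    HasDerivAt (fun s => f (s - r) * g (s + r))
      (f' (t - r) * g (t + r) + f (t - r) * g' (t + r)) t :=
  ((hf (t - r)).comp_sub_const t r).mul ((hg (t + r)).comp_add_const t r)

theorem hasDerivAt_const_sub_mul_const_add (hf : ∀ x, HasDerivAt f (f' x) x)
    (hg : ∀ x, HasDerivAt g (g' x) x) (t r : ℝ) :
    HasDerivAt (fun ρ => f (t - ρ) * g (t + ρ))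
      (f (t - r) * g' (t + r) - f' (t - r) * g (t + r)) r :=
  (((hf (t - r)).comp_const_sub t r).mul ((hg (t + r)).comp_const_add t r)).congr_deriv (by ring)

theorem radialWave_comp_sub_mul_comp_add (hf : ∀ x, HasDerivAt f (f' x) x)
    (hg : ∀ x, HasDerivAt g (g' x) x) (hf' : Differentiable ℝ f') (hg' : Differentiable ℝ g')
    {r : ℝ} (hr : r ≠ 0) (t : ℝ) :
    radialWave (fun t r => f (t - r) * g (t + r)) t r
      = 4 * f' (t - r) * g' (t + r)
        - 2 / r * (f (t - r) * g' (t + r) - f' (t - r) * g (t + r)) := by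
  have hf'' : ∀ x, HasDerivAt f' (deriv f' x) x := fun x => (hf' x).hasDerivAt
  have hg'' : ∀ x, HasDerivAt g' (deriv g' x) x := fun x => (hg' x).hasDerivAt
  have dt : deriv (fun s => deriv (fun s' => f (s' - r) * g (s' + r)) s) t
      = deriv f' (t - r) * g (t + r) + 2 * (f' (t - r) * g' (t + r))
        + f (t - r) * deriv g' (t + r) := by
    simp only [fun s => (hasDerivAt_comp_sub_mul_comp_add hf hg r s).deriv]
    exact ((hasDerivAt_comp_sub_mul_comp_add hf'' hg r t).add
      (hasDerivAt_comp_sub_mul_comp_add hf hg'' r t)).deriv.trans (by ring)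
  have dr : deriv (fun ρ => ρ ^ 2 * deriv (fun ρ' => f (t - ρ') * g (t + ρ')) ρ) r
      = 2 * r * (f (t - r) * g' (t + r) - f' (t - r) * g (t + r))
        + r ^ 2 * (deriv f' (t - r) * g (t + r) - 2 * (f' (t - r) * g' (t + r))
          + f (t - r) * deriv g' (t + r)) := by
    simp only [fun ρ => (hasDerivAt_const_sub_mul_const_add hf hg t ρ).deriv]
    exact ((hasDerivAt_pow 2 r).mul ((hasDerivAt_const_sub_mul_const_add hf hg'' t r).sub
      (hasDerivAt_const_sub_mul_const_add hf'' hg t r))).deriv.trans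
      (by simp only [Pi.sub_apply]; ring)
  rw [radialWave, dt, dr]
  field_simp
  ring

end NullProduct

noncomputable def invJapaneseBracket (x : ℝ) : ℝ := (√(1 + x ^ 2))⁻¹

theorem invJapaneseBracket_sq_mul (x : ℝ) : invJapaneseBracket x ^ 2 * (1 + x ^ 2) = 1 := by
  rw [invJapaneseBracket, inv_pow, sq_sqrt (by positivity), inv_mul_cancel₀ (by positivity)]

theorem hasDerivAt_invJapaneseBracket (x : ℝ) :
    HasDerivAt invJapaneseBracket (-x * invJapaneseBracket x ^ 3) x := by
  have hpos : 0 < 1 + x ^ 2 := by positivity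
  have := (((hasDerivAt_pow 2 x).const_add 1).sqrt hpos.ne').inv (sqrt_pos.2 hpos).ne'
  refine this.congr_deriv ?_
  rw [invJapaneseBracket, ← sq_sqrt hpos.le]
  field_simp
  norm_num

theorem differentiable_invJapaneseBracket : Differentiable ℝ invJapaneseBracket :=
  fun x => (hasDerivAt_invJapaneseBracket x).differentiableAt

theorem stmt_13 :
    let Ω : ℝ → ℝ → ℝ := fun t r =>
      2 / (Real.sqrt (1 + (t - r) ^ 2) * Real.sqrt (1 + (t + r) ^ 2))
    ∀ t r : ℝ, 0 < r →
      deriv (fun s : ℝ => deriv (fun s' : ℝ => Ω s' r) s) t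
        - (1 / r ^ 2) * deriv (fun ρ : ℝ => ρ ^ 2 * deriv (fun ρ' : ℝ => Ω t ρ') ρ) r
      = (Ω t r) ^ 3 := by
  intro Ω t r hr
  have hΩ : Ω = fun t r => 2 * invJapaneseBracket (t - r) * invJapaneseBracket (t + r) := by
    funext t r
    simp only [Ω, invJapaneseBracket, div_eq_mul_inv, mul_inv, mul_assoc]
  have hh' : Differentiable ℝ fun x => -x * invJapaneseBracket x ^ 3 :=
    differentiable_neg.mul (differentiable_invJapaneseBracket.pow 3)
  show radialWave Ω t r = Ω t r ^ 3
  rw [hΩ, radialWave_comp_sub_mul_comp_add (fun x => (hasDerivAt_invJapaneseBracket x).const_mul 2)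
    hasDerivAt_invJapaneseBracket (hh'.const_mul 2) hh' hr.ne']
  have ha := invJapaneseBracket_sq_mul (t - r)
  have hb := invJapaneseBracket_sq_mul (t + r)
  beta_reduce
  generalize invJapaneseBracket (t - r) = a at ha ⊢
  generalize invJapaneseBracket (t + r) = b at hb ⊢
  field_simp
  -- `(t + r) b² - (t - r) a² = 2r (1 - (t² - r²)) a² b²` modulo the two relations
  linear_combination (-2 * a * b * (t + r) * b ^ 2) * ha + (2 * a * b * (t - r) * a ^ 2) * hb
end
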